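/- Let n ≥ 1 and let L_S(n) be the 4n×4n real symmetric matrix with diagonal entries 4 at positions j ≡ 0 or 1 (mod 4) and 2 at positions j ≡ 2 or 3 (mod 4), entries −1 on the sub- and super-diagonal, corner entries (L_S)_{1,4n} = (L_S)_{4n,1} = +1, and all other entries 0. Let μ = 15 + 4√14 and ν = 15 − 4√14. Then the sum over j = 1, …, 4n of the determinants of the matrices obtained from L_S(n) by deleting the j-th row and j-th column (equivalently, (−1)^{4n−1} times the coefficient of x in the characteristic polynomial det(xI − L_S(n))) equals (9n√14/14)(μ^n − ν^n). -/
import Mathlib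


noncomputable def mu : ℝ := 15 + 4 * Real.sqrt 14
noncomputable def nu : ℝ := 15 - 4 * Real.sqrt 14

/-- The matrix `L_S(n)`: 4n×4n, diagonal entries 4 at (1-indexed) positions ≡ 0,1 (mod 4)
and 2 at positions ≡ 2,3 (mod 4), −1 on the sub/super-diagonal, +1 in the corners. -/
def LS (n : ℕ) : Matrix (Fin (4 * n)) (Fin (4 * n)) ℝ :=
  Matrix.of fun i j =>
    if i.val = j.val then
      (if (i.val + 1) % 4 = 0 ∨ (i.val + 1) % 4 = 1 then 4 else 2)
    else if i.val + 1 = j.val ∨ j.val + 1 = i.val then -1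
    else if (i.val = 0 ∧ j.val = 4 * n - 1) ∨ (j.val = 0 ∧ i.val = 4 * n - 1) then 1
    else 0

/-- Delete the row and column through position `j` of an `(m+1)×(m+1)` matrix. -/
def deleteRC {m : ℕ} (M : Matrix (Fin (m + 1)) (Fin (m + 1)) ℝ) (j : Fin (m + 1)) :
    Matrix (Fin m) (Fin m) ℝ :=
  M.submatrix j.succAbove j.succAbove


set_option maxHeartbeats 2000000

lemma succAbove_val {k:ℕ} (p : Fin (k+1)) (x : Fin k) :
    ((p.succAbove x : Fin (k+1)) : ℕ) = if (x:ℕ) < (p:ℕ) then (x:ℕ) else (x:ℕ) + 1 := by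
  simp only [Fin.succAbove]
  split_ifs with h h' h' <;> simp_all [Fin.lt_def]

def cont (f : ℕ → ℝ) : ℕ → ℝ
  | 0 => 1
  | 1 => f 0
  | (k+2) => f (k+1) * cont f (k+1) - cont f k

lemma cont_rec (f : ℕ → ℝ) (k : ℕ) : cont f (k+2) = f (k+1) * cont f (k+1) - cont f k := rfl

lemma cont0 (f : ℕ → ℝ) : cont f 0 = 1 := rfl
lemma cont1 (f : ℕ → ℝ) : cont f 1 = f 0 := rfl
lemma cont2 (f : ℕ → ℝ) : cont f 2 = f 1 * cont f 1 - cont f 0 := cont_rec f 0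
lemma cont3 (f : ℕ → ℝ) : cont f 3 = f 2 * cont f 2 - cont f 1 := cont_rec f 1
lemma cont4 (f : ℕ → ℝ) : cont f 4 = f 3 * cont f 3 - cont f 2 := cont_rec f 2
lemma cont5 (f : ℕ → ℝ) : cont f 5 = f 4 * cont f 4 - cont f 3 := cont_rec f 3
lemma cont6 (f : ℕ → ℝ) : cont f 6 = f 5 * cont f 5 - cont f 4 := cont_rec f 4
lemma cont7 (f : ℕ → ℝ) : cont f 7 = f 6 * cont f 6 - cont f 5 := cont_rec f 5
lemma cont8 (f : ℕ → ℝ) : cont f 8 = f 7 * cont f 7 - cont f 6 := cont_rec f 6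
lemma cont9 (f : ℕ → ℝ) : cont f 9 = f 8 * cont f 8 - cont f 7 := cont_rec f 7

def tri (f e : ℕ → ℝ) (x y : ℕ) : ℝ :=
  if x = y then f x else if x + 1 = y then e x else if y + 1 = x then e y else 0

def dd : ℕ → ℝ := fun k => if k % 4 = 0 ∨ k % 4 = 3 then 4 else 2

def dr (r : ℕ) : ℕ → ℝ := fun i => dd (r + i)

lemma dd_per (x : ℕ) : dd (x + 4) = dd x := by
  simp only [dd]
  rw [show (x+4)%4 = x%4 by omega]

lemma dr_per (r k : ℕ) : dr r (k + 4) = dr r k := by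
  simp only [dr]
  rw [show r + (k+4) = (r+k)+4 by ring, dd_per]

lemma shift_dr (A : ℕ) : (fun i => dd (A + i)) = dr (A % 4) := by
  funext i
  simp only [dd, dr]
  rw [show (A+i)%4 = (A%4+i)%4 by omega]

def rot (m c : ℕ) (hc : c < m) : Fin m ≃ Fin m where
  toFun i := ⟨if i.val + c < m then i.val + c else i.val + c - m,
    by have := i.isLt; split_ifs <;> omega⟩
  invFun i := ⟨if i.val + (m - c) < m then i.val + (m - c) else i.val + (m - c) - m,
    by have := i.isLt; split_ifs <;> omega⟩
  left_inv := by
    intro i; have := i.isLt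
    apply Fin.ext; simp only; split_ifs <;> omega
  right_inv := by
    intro i; have := i.isLt
    apply Fin.ext; simp only; split_ifs <;> omega

lemma det_last_col {k : ℕ} (P : Matrix (Fin (k+1)) (Fin (k+1)) ℝ)
    (h : ∀ i : Fin k, P i.castSucc (Fin.last k) = 0) :
    P.det = P (Fin.last k) (Fin.last k) * (P.submatrix Fin.castSucc Fin.castSucc).det := by
  rw [Matrix.det_succ_column P (Fin.last k), Fin.sum_univ_castSucc]
  simp only [h, mul_zero, zero_mul, Finset.sum_const_zero, zero_add, Fin.val_last,
    Fin.succAbove_last]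
  rw [show ((-1:ℝ))^(k+k) = 1 from Even.neg_one_pow ⟨k, rfl⟩]
  ring

lemma det_tridiag (f e : ℕ → ℝ) (he : ∀ i, e i * e i = 1) :
    ∀ m, ∀ M : Matrix (Fin m) (Fin m) ℝ,
    (∀ i j : Fin m, M i j = tri f e i j) → M.det = cont f m := by
  intro m
  induction m using Nat.strong_induction_on with
  | _ m IH =>
    match m with
    | 0 => intro M _; simp [Matrix.det_fin_zero, cont]
    | 1 =>
      intro M hM
      rw [Matrix.det_fin_one, hM 0 0]
      simp [tri, cont]
    | (k+2) =>
      intro M hM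
      rw [Matrix.det_succ_row M (Fin.last (k+1)), Fin.sum_univ_castSucc, Fin.sum_univ_castSucc]
      have hz : ∀ c : Fin k, M (Fin.last (k+1)) c.castSucc.castSucc = 0 := by
        intro c
        rw [hM]
        have hc : (c:ℕ) < k := c.isLt
        simp only [tri, Fin.val_last, Fin.coe_castSucc]
        split_ifs <;> first | rfl | omega
      simp only [hz, mul_zero, zero_mul, Finset.sum_const_zero, zero_add]
      have hcol : ((Fin.last k).castSucc : Fin (k+2)).val = k := rfl
      have hMk : M (Fin.last (k+1)) (Fin.last k).castSucc = e k := by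
        rw [hM]; simp only [tri, Fin.val_last, hcol]
        split_ifs <;> first | rfl | omega
      have hMl : M (Fin.last (k+1)) (Fin.last (k+1)) = f (k+1) := by
        rw [hM]; simp only [tri, Fin.val_last]; split_ifs <;> first | rfl | omega
      have hsub1 : ∀ a b : Fin (k+1),
          (M.submatrix (Fin.last (k+1)).succAbove (Fin.last (k+1)).succAbove) a b
            = tri f e a b := by
        intro a b
        simp only [Matrix.submatrix_apply, Fin.succAbove_last]
        rw [hM]
        simp [tri]
      have hdet1 : (M.submatrix (Fin.last (k+1)).succAbove (Fin.last (k+1)).succAbove).det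
          = cont f (k+1) := IH (k+1) (by omega) _ hsub1
      set P := M.submatrix (Fin.last (k+1)).succAbove ((Fin.last k).castSucc).succAbove with hP
      have rowval : ∀ a : Fin (k+1), (((Fin.last (k+1)).succAbove a) : ℕ) = a := by
        intro a; simp [Fin.succAbove_last]
      have colval : ∀ b : Fin (k+1),
          ((((Fin.last k).castSucc : Fin (k+2)).succAbove b) : ℕ)
            = if (b:ℕ) < k then (b:ℕ) else (b:ℕ)+1 := by
        intro b; rw [succAbove_val]; simp
      have hPval : ∀ (a b : Fin (k+1)),
          P a b = tri f e (a:ℕ) (if (b:ℕ) < k then (b:ℕ) else (b:ℕ)+1) := by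
        intro a b
        simp only [hP, Matrix.submatrix_apply]
        rw [hM, rowval, colval]
      have hPz : ∀ i : Fin k, P i.castSucc (Fin.last k) = 0 := by
        intro i
        rw [hPval]
        have : (i:ℕ) < k := i.isLt
        simp only [tri, Fin.coe_castSucc, Fin.val_last]
        split_ifs <;> first | rfl | omega
      have hPll : P (Fin.last k) (Fin.last k) = e k := by
        rw [hPval]
        simp only [tri, Fin.val_last]
        split_ifs <;> first | rfl | omega
      have hPsub : ∀ a b : Fin k, (P.submatrix Fin.castSucc Fin.castSucc) a b = tri f e a b := by
        intro a b
        have hb : (b:ℕ) < k := b.isLt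
        simp only [Matrix.submatrix_apply]
        rw [hPval]
        simp only [Fin.coe_castSucc, if_pos hb]
      have hPdet : P.det = e k * cont f k := by
        rw [det_last_col P hPz, hPll, IH k (by omega) _ hPsub]
      rw [hMk, hMl, hdet1, hPdet]
      simp only [Fin.val_last, Fin.coe_castSucc]
      rw [show ((-1:ℝ))^((k+1)+k) = -1 from Odd.neg_one_pow ⟨k, by ring⟩,
        show ((-1:ℝ))^((k+1)+(k+1)) = 1 from Even.neg_one_pow ⟨k+1, rfl⟩, cont_rec]
      linear_combination (-(cont f k)) * he k

lemma minor_det (n : ℕ) (hn : 1 ≤ n) (h : 4*n = (4*n-1)+1) (j : Fin (4*n)) :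
    (deleteRC ((LS n).reindex (finCongr h) (finCongr h)) (Fin.cast h j)).det
      = cont (fun i => dd (j.val + 1 + i)) (4*n-1) := by
  have hn4 : 4 ≤ 4*n := by omega
  have hj : j.val < 4*n := j.isLt
  obtain ⟨c, hc, hcs⟩ : ∃ c, c < 4*n-1 ∧ ((j.val < 4*n-1 ∧ c = j.val) ∨ (j.val = 4*n-1 ∧ c = 0)) := by
    by_cases hj4 : j.val = 4*n-1
    · exact ⟨0, by omega, Or.inr ⟨hj4, rfl⟩⟩
    · exact ⟨j.val, by omega, Or.inl ⟨by omega, rfl⟩⟩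
  set ρ := rot (4*n-1) c hc with hρ
  rw [← Matrix.det_submatrix_equiv_self ρ]
  apply det_tridiag (fun i => dd (j.val + 1 + i))
      (fun i => if j.val + i + 2 = 4*n ∨ j.val + i + 2 = 8*n then (1:ℝ) else -1)
      (by intro i; split_ifs <;> norm_num)
  intro a b
  have ha : (a:ℕ) < 4*n-1 := a.isLt
  have hb : (b:ℕ) < 4*n-1 := b.isLt
  simp only [Matrix.submatrix_apply, deleteRC, Matrix.reindex_apply, hρ]
  have key : ∀ x : Fin (4*n-1),
      (((finCongr h).symm ((Fin.cast h j).succAbove (rot (4*n-1) c hc x))) : ℕ)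
        = if (if (x:ℕ) + c < 4*n-1 then (x:ℕ) + c else (x:ℕ) + c - (4*n-1)) < j.val
          then (if (x:ℕ) + c < 4*n-1 then (x:ℕ) + c else (x:ℕ) + c - (4*n-1))
          else (if (x:ℕ) + c < 4*n-1 then (x:ℕ) + c else (x:ℕ) + c - (4*n-1)) + 1 := by
    intro x
    simp only [finCongr_symm, finCongr_apply, Fin.coe_cast]
    rw [succAbove_val]
    rfl
  simp only [LS, Matrix.of_apply, key, tri, dd]
  split_ifs <;> first | rfl | omega | (exfalso; casesm* _ ∨ _, _ ∧ _ <;> exact ‹False›)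

lemma cont_periodic_rec (f : ℕ → ℝ) (hf : ∀ k, f (k+4) = f k)
    (h8 : cont f 8 = 30 * cont f 4 - cont f 0)
    (h9 : cont f 9 = 30 * cont f 5 - cont f 1) :
    ∀ k, cont f (k+8) = 30 * cont f (k+4) - cont f k := by
  have main : ∀ k, (cont f (k+8) = 30*cont f (k+4) - cont f k)
      ∧ (cont f (k+9) = 30*cont f (k+5) - cont f (k+1)) := by
    intro k
    induction k with
    | zero => exact ⟨h8, h9⟩
    | succ p ih =>
      refine ⟨ih.2, ?_⟩
      show cont f (p+10) = 30 * cont f (p+6) - cont f (p+2)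
      have e10 : cont f (p+10) = f (p+9) * cont f (p+9) - cont f (p+8) := cont_rec f (p+8)
      have e6 : cont f (p+6) = f (p+5) * cont f (p+5) - cont f (p+4) := cont_rec f (p+4)
      have e2 : cont f (p+2) = f (p+1) * cont f (p+1) - cont f p := cont_rec f p
      have hf9 : f (p+9) = f (p+5) := hf (p+5)
      have hf5 : f (p+5) = f (p+1) := hf (p+1)
      rw [e10, e6, e2, hf9, hf5, ih.2, ih.1]
      ring
  exact fun k => (main k).1

noncomputable def gs : ℕ → ℝ := fun p =>
  cont (dr 0) (4*p+3) + cont (dr 1) (4*p+3) + cont (dr 2) (4*p+3) + cont (dr 3) (4*p+3)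

lemma gs0 : gs 0 = 72 := by
  norm_num [gs, cont3, cont2, cont1, cont0, dr, dd]

lemma gs1 : gs 1 = 2160 := by
  norm_num [gs, cont7, cont6, cont5, cont4, cont3, cont2, cont1, cont0, dr, dd]

lemma gs_rec (p : ℕ) : gs (p+2) = 30 * gs (p+1) - gs p := by
  have key : ∀ r : ℕ, r < 4 → cont (dr r) (4*(p+2)+3) = 30 * cont (dr r) (4*(p+1)+3) - cont (dr r) (4*p+3) := by
    intro r hr
    have hrec := cont_periodic_rec (dr r) (dr_per r)
      (by interval_cases r <;>
        norm_num [cont8, cont7, cont6, cont5, cont4, cont3, cont2, cont1, cont0, dr, dd])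
      (by interval_cases r <;>
        norm_num [cont9, cont8, cont7, cont6, cont5, cont4, cont3, cont2, cont1, cont0, dr, dd])
      (4*p+3)
    rw [show 4*(p+2)+3 = (4*p+3)+8 by ring, show 4*(p+1)+3 = (4*p+3)+4 by ring]
    exact hrec
  simp only [gs]
  rw [key 0 (by norm_num), key 1 (by norm_num), key 2 (by norm_num), key 3 (by norm_num)]
  ring

noncomputable def us : ℕ → ℝ
  | 0 => 0
  | 1 => 1
  | (k+2) => 30 * us (k+1) - us k

lemma us0 : us 0 = 0 := rfl
lemma us1 : us 1 = 1 := rfl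
lemma us_rec (k : ℕ) : us (k+2) = 30 * us (k+1) - us k := rfl

lemma gs_eq : ∀ p, gs p = 72 * us (p+1) := by
  have main : ∀ p, gs p = 72 * us (p+1) ∧ gs (p+1) = 72 * us (p+2) := by
    intro p
    induction p with
    | zero =>
      constructor
      · rw [gs0, us1]; norm_num
      · rw [gs1, us_rec 0, us1, us0]; norm_num
    | succ q ih =>
      refine ⟨ih.2, ?_⟩
      show gs (q+2) = 72 * us (q+3)
      rw [gs_rec q, ih.1, ih.2, show q+3 = (q+1)+2 by ring, us_rec (q+1)]
      ring
  exact fun p => (main p).1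

lemma mu_nu_pow : ∀ k, mu^k - nu^k = 8 * Real.sqrt 14 * us k := by
  have h14 : Real.sqrt 14 ^ 2 = 14 := Real.sq_sqrt (by norm_num)
  have hmu : mu^2 = 30 * mu - 1 := by
    simp only [mu]; linear_combination 16 * h14
  have hnu : nu^2 = 30 * nu - 1 := by
    simp only [nu]; linear_combination 16 * h14
  have main : ∀ k, (mu^k - nu^k = 8 * Real.sqrt 14 * us k)
      ∧ (mu^(k+1) - nu^(k+1) = 8 * Real.sqrt 14 * us (k+1)) := by
    intro k
    induction k with
    | zero =>
      constructor
      · simp [us0]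
      · show mu^1 - nu^1 = 8 * Real.sqrt 14 * us 1
        rw [pow_one, pow_one, us1]; simp only [mu, nu]; ring
    | succ q ih =>
      refine ⟨ih.2, ?_⟩
      show mu^(q+2) - nu^(q+2) = 8 * Real.sqrt 14 * us (q+2)
      have em : mu^(q+2) = 30 * mu^(q+1) - mu^q := by
        calc mu^(q+2) = mu^q * mu^2 := by ring
        _ = mu^q * (30*mu - 1) := by rw [hmu]
        _ = 30 * mu^(q+1) - mu^q := by ring
      have en : nu^(q+2) = 30 * nu^(q+1) - nu^q := by
        calc nu^(q+2) = nu^q * nu^2 := by ring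
        _ = nu^q * (30*nu - 1) := by rw [hnu]
        _ = 30 * nu^(q+1) - nu^q := by ring
      rw [em, en, us_rec q]
      nlinarith [ih.1, ih.2]
  exact fun k => (main k).1

lemma count_sum (F : ℕ → ℝ) : ∀ n : ℕ, (∑ i ∈ Finset.range (4*n), F ((i+1)%4))
    = n * (F 0 + F 1 + F 2 + F 3) := by
  intro n
  induction n with
  | zero => simp
  | succ p ih =>
    rw [show 4*(p+1) = (4*p)+1+1+1+1 by ring, Finset.sum_range_succ, Finset.sum_range_succ,
      Finset.sum_range_succ, Finset.sum_range_succ, ih,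
      show (4*p+1)%4 = 1 by omega, show (4*p+1+1)%4 = 2 by omega,
      show (4*p+1+1+1)%4 = 3 by omega, show (4*p+1+1+1+1)%4 = 0 by omega]
    push_cast
    ring

theorem stmt_7 (n : ℕ) (hn : 1 ≤ n) :
    ∑ j : Fin (4 * n),
        (deleteRC
          ((LS n).reindex (finCongr (by omega : 4 * n = (4 * n - 1) + 1))
            (finCongr (by omega : 4 * n = (4 * n - 1) + 1)))
          (Fin.cast (by omega) j)).det
      = (9 * n * Real.sqrt 14 / 14) * (mu ^ n - nu ^ n) := by
  have h14 : Real.sqrt 14 ^ 2 = 14 := Real.sq_sqrt (by norm_num)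
  calc ∑ j : Fin (4 * n),
        (deleteRC
          ((LS n).reindex (finCongr (by omega : 4 * n = (4 * n - 1) + 1))
            (finCongr (by omega : 4 * n = (4 * n - 1) + 1)))
          (Fin.cast (by omega) j)).det
      = ∑ j : Fin (4 * n), cont (dr ((j.val+1)%4)) (4*n-1) := by
        refine Finset.sum_congr rfl (fun j _ => ?_)
        rw [minor_det n hn _ j, shift_dr (j.val+1)]
    _ = ∑ i ∈ Finset.range (4*n), (fun i => cont (dr ((i+1)%4)) (4*n-1)) i := by
        exact Fin.sum_univ_eq_sum_range (fun i => cont (dr ((i+1)%4)) (4*n-1)) (4*n)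
    _ = (n:ℝ) * (cont (dr 0) (4*n-1) + cont (dr 1) (4*n-1) + cont (dr 2) (4*n-1)
          + cont (dr 3) (4*n-1)) := count_sum (fun r => cont (dr r) (4*n-1)) n
    _ = (n:ℝ) * gs (n-1) := by
        simp only [gs]
        rw [show 4*(n-1)+3 = 4*n-1 by omega]
    _ = (n:ℝ) * (72 * us n) := by rw [gs_eq (n-1), show n-1+1 = n by omega]
    _ = (9 * n * Real.sqrt 14 / 14) * (mu ^ n - nu ^ n) := by
        rw [mu_nu_pow n]
        linear_combination (-(36/7) * (n:ℝ) * us n) * h14
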